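/- arXiv:1405.2321 — 2 statements merged into one kernel-verified Lean document; each statement's English description precedes it below -/
import Mathlib

section
/- There exist constants M₀ > 0, ε₀ > 0 and L > 0 such that whenever ξ(1,1) < M₀, |h₁| < M₀ and |h₂| < M₀, the following stability holds: if (a,b) ∈ [0,1)² and 0 ≤ ε ≤ ε₀ satisfy |h₁² + ∂ₓξ(a,b)/γ − a/(1−a)²| ≤ ε and |h₂² + ∂_yξ(a,b)/(1−γ) − b/(1−b)²| ≤ ε, then |a − a₀| ≤ Lε and |b − b₀| ≤ Lε, where (a₀,b₀) ∈ [0,1)² is the unique solution of h₁² + ∂ₓξ(a₀,b₀)/γ = a₀/(1−a₀)² and h₂² + ∂_yξ(a₀,b₀)/(1−γ) = b₀/(1−b₀)². -/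
/-!
Multiplying the equations by `(1 - a)²` and `(1 - b)²` turns the system into the fixed-point
problem `x = T x`, `T(a, b) = ((h₁² + ∂ₓξ/γ)(1 - a)², (h₂² + ∂_yξ/(1 - γ))(1 - b)²)`.
Since `n aⁿ⁻¹ (1 - a)² ≤ 1` on `[0, 1]`, `T` is uniformly small on `[0, 1)²` when `ξ(1,1)`,
`h₁`, `h₂` are, so every approximate solution lies in `[0, 1/2]²`. There `n aⁿ⁻¹ ≤ 1` and
`a ↦ n aⁿ⁻¹` is `4`-Lipschitz, so `∂ₓξ` and `∂_yξ` are `5 ξ(1,1)`-Lipschitz, `T` is a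
`1/2`-contraction, and the Banach fixed-point theorem gives the solution `x₀`, its uniqueness,
and `‖x - x₀‖ ≤ 2 ‖x - T x‖ ≤ 2ε`.
-/

open Set

/-- The mixed bipartite covariance function `ξ(x,y) = Σ_{p,q} β_{p,q}² xᵖ y^q`. -/
noncomputable def xiFn (β : ℕ → ℕ → ℝ) (x y : ℝ) : ℝ :=
  ∑' pq : ℕ × ℕ, (β pq.1 pq.2) ^ 2 * x ^ pq.1 * y ^ pq.2

/-- `∂ₓξ(x,y)`, given by termwise differentiation. -/
noncomputable def dxXi (β : ℕ → ℕ → ℝ) (x y : ℝ) : ℝ :=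
  ∑' pq : ℕ × ℕ, (β pq.1 pq.2) ^ 2 * pq.1 * x ^ (pq.1 - 1) * y ^ pq.2

/-- `∂_yξ(x,y)`, given by termwise differentiation. -/
noncomputable def dyXi (β : ℕ → ℕ → ℝ) (x y : ℝ) : ℝ :=
  ∑' pq : ℕ × ℕ, (β pq.1 pq.2) ^ 2 * pq.2 * x ^ pq.1 * y ^ (pq.2 - 1)

lemma natCast_mul_pow_pred_le_one {x : ℝ} (hx₀ : 0 ≤ x) (hx : x ≤ 1 / 2) (n : ℕ) :
    n * x ^ (n - 1) ≤ 1 := by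
  rcases n with _ | k
  · simp
  have hk : ((k + 1 : ℕ) : ℝ) ≤ 2 ^ k := by exact_mod_cast Nat.lt_two_pow_self
  calc ((k + 1 : ℕ) : ℝ) * x ^ (k + 1 - 1) ≤ 2 ^ k * (1 / 2) ^ k := by
        rw [Nat.add_sub_cancel]; gcongr
    _ = 1 := by rw [← mul_pow]; norm_num

lemma add_two_mul_add_one_mul_pow_le_four {x : ℝ} (hx₀ : 0 ≤ x) (hx : x ≤ 1 / 2) (k : ℕ) :
    (k + 2) * (k + 1) * x ^ k ≤ 4 := by
  have hk : (k + 2) * (k + 1) ≤ 2 ^ (k + 2) := by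
    calc (k + 2) * (k + 1) = (k + 2).choose 2 * 2 := by
          simpa using Nat.add_one_mul_choose_eq (k + 1) 1
      _ ≤ 2 ^ (k + 1) * 2 := by gcongr; exact Nat.choose_succ_le_two_pow _ _
      _ = 2 ^ (k + 2) := by ring
  have hk' : ((k : ℝ) + 2) * (k + 1) ≤ 4 * 2 ^ k := by
    have : (((k + 2) * (k + 1) : ℕ) : ℝ) ≤ 2 ^ (k + 2) := by exact_mod_cast hk
    push_cast at this; linarith [pow_succ (2 : ℝ) (k + 1), pow_succ (2 : ℝ) k]
  calc ((k : ℝ) + 2) * (k + 1) * x ^ k ≤ 4 * 2 ^ k * (1 / 2) ^ k := by gcongr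
    _ = 4 := by rw [mul_assoc, ← mul_pow]; norm_num

lemma natCast_mul_pow_pred_mul_one_sub_sq_le_one {x : ℝ} (hx₀ : 0 ≤ x) (hx : x ≤ 1) (n : ℕ) :
    n * x ^ (n - 1) * (1 - x) ^ 2 ≤ 1 := by
  have hgeom : n * x ^ (n - 1) ≤ ∑ i ∈ Finset.range n, x ^ i := by
    calc (n : ℝ) * x ^ (n - 1) = ∑ _i ∈ Finset.range n, x ^ (n - 1) := by simp
      _ ≤ ∑ i ∈ Finset.range n, x ^ i := Finset.sum_le_sum fun i hi =>
          pow_le_pow_of_le_one hx₀ hx (Nat.le_sub_one_of_lt (Finset.mem_range.1 hi))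
  have h1 : 0 ≤ 1 - x := sub_nonneg.2 hx
  calc n * x ^ (n - 1) * (1 - x) ^ 2
      ≤ (∑ i ∈ Finset.range n, x ^ i) * (1 - x) * (1 - x) := by
        rw [sq, ← mul_assoc]; gcongr
    _ = (1 - x ^ n) * (1 - x) := by rw [geom_sum_mul_neg]
    _ ≤ 1 * 1 := by
        gcongr
        · linarith [pow_nonneg hx₀ n]
        · linarith
    _ = 1 := one_mul 1

lemma abs_pow_sub_pow_le_of_le_half {x y : ℝ} (hx : x ∈ Icc (0 : ℝ) (1 / 2))
    (hy : y ∈ Icc (0 : ℝ) (1 / 2)) (n : ℕ) : |x ^ n - y ^ n| ≤ |x - y| := by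
  have hm₀ : 0 ≤ max |x| |y| := le_max_of_le_left (abs_nonneg x)
  have hm : max |x| |y| ≤ 1 / 2 := by
    rw [abs_of_nonneg hx.1, abs_of_nonneg hy.1]; exact max_le hx.2 hy.2
  calc |x ^ n - y ^ n| ≤ |x - y| * n * max |x| |y| ^ (n - 1) := abs_pow_sub_pow_le x y n
    _ ≤ |x - y| * 1 := by
        rw [mul_assoc]; gcongr; exact natCast_mul_pow_pred_le_one hm₀ hm n
    _ = |x - y| := mul_one _

lemma abs_natCast_mul_pow_pred_sub_le {x y : ℝ} (hx : x ∈ Icc (0 : ℝ) (1 / 2))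
    (hy : y ∈ Icc (0 : ℝ) (1 / 2)) (n : ℕ) :
    |n * x ^ (n - 1) - n * y ^ (n - 1)| ≤ 4 * |x - y| := by
  have hm₀ : 0 ≤ max |x| |y| := le_max_of_le_left (abs_nonneg x)
  have hm : max |x| |y| ≤ 1 / 2 := by
    rw [abs_of_nonneg hx.1, abs_of_nonneg hy.1]; exact max_le hx.2 hy.2
  rcases n with _ | _ | k
  · simp
  · simp
  rw [← mul_sub, abs_mul, Nat.abs_cast]
  calc ((k + 2 : ℕ) : ℝ) * |x ^ (k + 2 - 1) - y ^ (k + 2 - 1)|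
      ≤ (k + 2 : ℕ) * (|x - y| * (k + 1 : ℕ) * max |x| |y| ^ (k + 1 - 1)) := by
        gcongr; exact abs_pow_sub_pow_le x y (k + 1)
    _ = (k + 2) * (k + 1) * max |x| |y| ^ k * |x - y| := by
        simp only [Nat.add_sub_cancel]; push_cast; ring
    _ ≤ 4 * |x - y| := by gcongr; exact add_two_mul_add_one_mul_pow_le_four hm₀ hm k

section WeightedSums

variable {ι : Type*} {w f g : ι → ℝ} {B C : ℝ}

lemma abs_tsum_mul_le (hw₀ : ∀ i, 0 ≤ w i) (hw : Summable w) (hf : ∀ i, |f i| ≤ C) :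
    |∑' i, w i * f i| ≤ C * ∑' i, w i := by
  rw [mul_comm, ← tsum_mul_right]
  refine tsum_of_norm_bounded (f := fun i => w i * f i) (hw.mul_right C).hasSum fun i => ?_
  rw [Real.norm_eq_abs, abs_mul, abs_of_nonneg (hw₀ i)]
  exact mul_le_mul_of_nonneg_left (hf i) (hw₀ i)

lemma summable_mul_of_abs_le (hw₀ : ∀ i, 0 ≤ w i) (hw : Summable w) (hf : ∀ i, |f i| ≤ B) :
    Summable fun i => w i * f i :=
  (hw.mul_right B).of_norm_bounded fun i => by
    rw [Real.norm_eq_abs, abs_mul, abs_of_nonneg (hw₀ i)]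
    exact mul_le_mul_of_nonneg_left (hf i) (hw₀ i)

lemma abs_tsum_mul_sub_tsum_mul_le (hw₀ : ∀ i, 0 ≤ w i) (hw : Summable w)
    (hf : ∀ i, |f i| ≤ B) (hg : ∀ i, |g i| ≤ B) (hfg : ∀ i, |f i - g i| ≤ C) :
    |∑' i, w i * f i - ∑' i, w i * g i| ≤ C * ∑' i, w i := by
  rw [← (summable_mul_of_abs_le hw₀ hw hf).tsum_sub (summable_mul_of_abs_le hw₀ hw hg)]
  simp_rw [← mul_sub]
  exact abs_tsum_mul_le hw₀ hw hfg

end WeightedSums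

section DerivativesOfXi

variable {β : ℕ → ℕ → ℝ}

lemma summable_sq_of_summable_two_pow_mul_sq
    (hβ : Summable fun pq : ℕ × ℕ => (2 : ℝ) ^ (pq.1 + pq.2) * β pq.1 pq.2 ^ 2) :
    Summable fun pq : ℕ × ℕ => β pq.1 pq.2 ^ 2 :=
  hβ.of_nonneg_of_le (fun _ => sq_nonneg _) fun _ =>
    le_mul_of_one_le_left (sq_nonneg _) (one_le_pow₀ one_le_two)

lemma xiFn_one_one : xiFn β 1 1 = ∑' pq : ℕ × ℕ, β pq.1 pq.2 ^ 2 := by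
  simp [xiFn]

lemma dxXi_eq_tsum (a b : ℝ) :
    dxXi β a b = ∑' pq : ℕ × ℕ, β pq.1 pq.2 ^ 2 * (pq.1 * a ^ (pq.1 - 1) * b ^ pq.2) :=
  tsum_congr fun _ => by ring

lemma dxXi_nonneg {a b : ℝ} (ha : 0 ≤ a) (hb : 0 ≤ b) : 0 ≤ dxXi β a b :=
  tsum_nonneg fun _ => by positivity

lemma dxXi_mul_one_sub_sq_le (hβ : Summable fun pq : ℕ × ℕ => β pq.1 pq.2 ^ 2) {a b : ℝ}
    (ha₀ : 0 ≤ a) (ha : a ≤ 1) (hb₀ : 0 ≤ b) (hb : b ≤ 1) :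
    dxXi β a b * (1 - a) ^ 2 ≤ xiFn β 1 1 := by
  have hterm : ∀ pq : ℕ × ℕ, |pq.1 * a ^ (pq.1 - 1) * b ^ pq.2 * (1 - a) ^ 2| ≤ 1 := by
    intro ⟨p, q⟩
    rw [abs_of_nonneg (by positivity)]
    calc p * a ^ (p - 1) * b ^ q * (1 - a) ^ 2 = p * a ^ (p - 1) * (1 - a) ^ 2 * b ^ q := by ring
      _ ≤ 1 * 1 := by
        gcongr
        · exact natCast_mul_pow_pred_mul_one_sub_sq_le_one ha₀ ha p
        · exact pow_le_one₀ hb₀ hb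
      _ = 1 := one_mul 1
  calc dxXi β a b * (1 - a) ^ 2
      = ∑' pq : ℕ × ℕ, β pq.1 pq.2 ^ 2 * (pq.1 * a ^ (pq.1 - 1) * b ^ pq.2 * (1 - a) ^ 2) := by
        rw [dxXi_eq_tsum, ← tsum_mul_right]; exact tsum_congr fun _ => by ring
    _ ≤ 1 * ∑' pq : ℕ × ℕ, β pq.1 pq.2 ^ 2 :=
        (le_abs_self _).trans (abs_tsum_mul_le (fun _ => sq_nonneg _) hβ hterm)
    _ = xiFn β 1 1 := by rw [one_mul, xiFn_one_one]

lemma abs_natCast_mul_pow_pred_mul_pow_sub_le {x y : ℝ × ℝ}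
    (hx : x ∈ Icc (0 : ℝ) (1 / 2) ×ˢ Icc (0 : ℝ) (1 / 2))
    (hy : y ∈ Icc (0 : ℝ) (1 / 2) ×ˢ Icc (0 : ℝ) (1 / 2)) (p q : ℕ) :
    |p * x.1 ^ (p - 1) * x.2 ^ q - p * y.1 ^ (p - 1) * y.2 ^ q| ≤ 5 * dist x y := by
  obtain ⟨hx₁, hx₂⟩ := hx
  obtain ⟨hy₁, hy₂⟩ := hy
  have h₁ : |x.1 - y.1| ≤ dist x y := le_max_left _ _
  have h₂ : |x.2 - y.2| ≤ dist x y := le_max_right _ _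
  have hq : |x.2 ^ q| ≤ 1 := by
    rw [abs_of_nonneg (pow_nonneg hx₂.1 q)]; exact pow_le_one₀ hx₂.1 (by linarith [hx₂.2])
  have hp : |p * y.1 ^ (p - 1)| ≤ 1 := by
    rw [abs_of_nonneg (by have := hy₁.1; positivity)]
    exact natCast_mul_pow_pred_le_one hy₁.1 hy₁.2 p
  calc |p * x.1 ^ (p - 1) * x.2 ^ q - p * y.1 ^ (p - 1) * y.2 ^ q|
      = |(p * x.1 ^ (p - 1) - p * y.1 ^ (p - 1)) * x.2 ^ q
          + p * y.1 ^ (p - 1) * (x.2 ^ q - y.2 ^ q)| := by ring_nf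
    _ ≤ 4 * |x.1 - y.1| * 1 + 1 * |x.2 - y.2| := by
        refine (abs_add_le _ _).trans (add_le_add ?_ ?_) <;> rw [abs_mul]
        · exact mul_le_mul (abs_natCast_mul_pow_pred_sub_le hx₁ hy₁ p) hq (abs_nonneg _)
            (by positivity)
        · exact mul_le_mul hp (abs_pow_sub_pow_le_of_le_half hx₂ hy₂ q) (abs_nonneg _)
            zero_le_one
    _ ≤ 5 * dist x y := by linarith

lemma abs_dxXi_sub_dxXi_le (hβ : Summable fun pq : ℕ × ℕ => β pq.1 pq.2 ^ 2) {x y : ℝ × ℝ}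
    (hx : x ∈ Icc (0 : ℝ) (1 / 2) ×ˢ Icc (0 : ℝ) (1 / 2))
    (hy : y ∈ Icc (0 : ℝ) (1 / 2) ×ˢ Icc (0 : ℝ) (1 / 2)) :
    |dxXi β x.1 x.2 - dxXi β y.1 y.2| ≤ 5 * xiFn β 1 1 * dist x y := by
  have hbound : ∀ z ∈ Icc (0 : ℝ) (1 / 2) ×ˢ Icc (0 : ℝ) (1 / 2), ∀ pq : ℕ × ℕ,
      |pq.1 * z.1 ^ (pq.1 - 1) * z.2 ^ pq.2| ≤ 1 := by
    intro z ⟨hz₁, hz₂⟩ ⟨p, q⟩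
    rw [abs_of_nonneg (by have := hz₁.1; have := hz₂.1; positivity)]
    exact mul_le_one₀ (natCast_mul_pow_pred_le_one hz₁.1 hz₁.2 p) (pow_nonneg hz₂.1 q)
      (pow_le_one₀ hz₂.1 (by linarith [hz₂.2]))
  rw [dxXi_eq_tsum, dxXi_eq_tsum, mul_right_comm, xiFn_one_one]
  exact abs_tsum_mul_sub_tsum_mul_le (fun _ => sq_nonneg _) hβ (hbound x hx) (hbound y hy)
    fun ⟨p, q⟩ => abs_natCast_mul_pow_pred_mul_pow_sub_le hx hy p q

lemma dyXi_eq_dxXi_swap (a b : ℝ) : dyXi β a b = dxXi (fun p q => β q p) b a := by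
  rw [dyXi, dxXi, ← (Equiv.prodComm ℕ ℕ).tsum_eq]
  exact tsum_congr fun _ => by simp only [Equiv.prodComm_apply, Prod.fst_swap, Prod.snd_swap]; ring

lemma xiFn_swap_one_one : xiFn (fun p q => β q p) 1 1 = xiFn β 1 1 := by
  rw [xiFn_one_one, xiFn_one_one]
  exact (Equiv.prodComm ℕ ℕ).tsum_eq fun pq => β pq.1 pq.2 ^ 2

lemma summable_sq_swap (hβ : Summable fun pq : ℕ × ℕ => β pq.1 pq.2 ^ 2) :
    Summable fun pq : ℕ × ℕ => β pq.2 pq.1 ^ 2 :=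
  (Equiv.prodComm ℕ ℕ).summable_iff.2 hβ

lemma dyXi_nonneg {a b : ℝ} (ha : 0 ≤ a) (hb : 0 ≤ b) : 0 ≤ dyXi β a b :=
  dyXi_eq_dxXi_swap a b ▸ dxXi_nonneg hb ha

lemma dyXi_mul_one_sub_sq_le (hβ : Summable fun pq : ℕ × ℕ => β pq.1 pq.2 ^ 2) {a b : ℝ}
    (ha₀ : 0 ≤ a) (ha : a ≤ 1) (hb₀ : 0 ≤ b) (hb : b ≤ 1) :
    dyXi β a b * (1 - b) ^ 2 ≤ xiFn β 1 1 := by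
  rw [dyXi_eq_dxXi_swap, ← xiFn_swap_one_one]
  exact dxXi_mul_one_sub_sq_le (β := fun p q => β q p) (summable_sq_swap hβ) hb₀ hb ha₀ ha

lemma abs_dyXi_sub_dyXi_le (hβ : Summable fun pq : ℕ × ℕ => β pq.1 pq.2 ^ 2) {x y : ℝ × ℝ}
    (hx : x ∈ Icc (0 : ℝ) (1 / 2) ×ˢ Icc (0 : ℝ) (1 / 2))
    (hy : y ∈ Icc (0 : ℝ) (1 / 2) ×ˢ Icc (0 : ℝ) (1 / 2)) :
    |dyXi β x.1 x.2 - dyXi β y.1 y.2| ≤ 5 * xiFn β 1 1 * dist x y := by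
  have hswap : dist x.swap y.swap = dist x y := max_comm _ _
  rw [dyXi_eq_dxXi_swap, dyXi_eq_dxXi_swap, ← xiFn_swap_one_one, ← hswap]
  exact abs_dxXi_sub_dxXi_le (β := fun p q => β q p) (summable_sq_swap hβ) (x := x.swap)
    (y := y.swap) ⟨hx.2, hx.1⟩ ⟨hy.2, hy.1⟩

end DerivativesOfXi

lemma exists_isFixedPt_dist_le_of_mapsTo {α : Type*} [MetricSpace α] {f : α → α} {s : Set α}
    {K : NNReal} (hK : K < 1) (hs : IsComplete s) (hs₀ : s.Nonempty) (hsf : MapsTo f s s)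
    (hf : ∀ x ∈ s, ∀ y ∈ s, dist (f x) (f y) ≤ K * dist x y) :
    ∃ x₀ ∈ s, Function.IsFixedPt f x₀ ∧ ∀ x ∈ s, dist x x₀ ≤ dist x (f x) / (1 - K) := by
  have := hs.completeSpace_coe
  have := hs₀.to_subtype
  have hg : ContractingWith K (hsf.restrict f s s) :=
    ⟨hK, LipschitzWith.of_dist_le_mul fun x y => hf x x.2 y y.2⟩
  exact ⟨_, (ContractingWith.fixedPoint _ hg).2, congrArg Subtype.val hg.fixedPoint_isFixedPt,
    fun x hx => hg.dist_fixedPoint_le ⟨x, hx⟩⟩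

section OneCoordinate

variable {Φ Φ' a a' ε d : ℝ}

lemma abs_mul_one_sub_sq_sub_le (ha₀ : 0 ≤ a) (ha : a < 1) (h : |Φ - a / (1 - a) ^ 2| ≤ ε) :
    |Φ * (1 - a) ^ 2 - a| ≤ ε := by
  have hpos : 0 < (1 - a) ^ 2 := by nlinarith
  have hle : (1 - a) ^ 2 ≤ 1 := by nlinarith
  calc |Φ * (1 - a) ^ 2 - a| = |Φ - a / (1 - a) ^ 2| * (1 - a) ^ 2 := by
        rw [← abs_of_pos hpos, ← abs_mul, abs_of_pos hpos, sub_mul, div_mul_cancel₀ _ hpos.ne']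
    _ ≤ ε * 1 := mul_le_mul h hle hpos.le ((abs_nonneg _).trans h)
    _ = ε := mul_one ε

lemma le_half_of_abs_sub_div_one_sub_sq_le (ha₀ : 0 ≤ a) (ha : a < 1)
    (hΦ : Φ * (1 - a) ^ 2 ≤ 1 / 100) (hε : ε ≤ 1 / 100) (h : |Φ - a / (1 - a) ^ 2| ≤ ε) :
    a ≤ 1 / 2 := by
  linarith [(abs_le.1 (abs_mul_one_sub_sq_sub_le ha₀ ha h)).1]

lemma le_of_mul_one_sub_sq_le (ha : a ≤ 1 / 2) (hΦ : Φ * (1 - a) ^ 2 ≤ 1 / 100) :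
    Φ ≤ 1 / 25 := by
  by_contra! h
  nlinarith [mul_le_mul_of_nonneg_left (show 1 / 4 ≤ (1 - a) ^ 2 by nlinarith)
    (show 0 ≤ Φ by linarith)]

lemma abs_mul_one_sub_sq_sub_mul_one_sub_sq_le (ha : a ∈ Icc (0 : ℝ) (1 / 2))
    (ha' : a' ∈ Icc (0 : ℝ) (1 / 2)) (hΦ'₀ : 0 ≤ Φ') (hΦ' : Φ' ≤ 1 / 25)
    (hΦ : |Φ - Φ'| ≤ d / 10) (had : |a - a'| ≤ d) :
    |Φ * (1 - a) ^ 2 - Φ' * (1 - a') ^ 2| ≤ d / 2 := by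
  obtain ⟨ha₀, ha₁⟩ := ha
  obtain ⟨ha'₀, ha'₁⟩ := ha'
  have h₁ : |(Φ - Φ') * (1 - a) ^ 2| ≤ d / 10 := by
    rw [abs_mul, abs_of_nonneg (sq_nonneg (1 - a))]
    exact (mul_le_of_le_one_right (abs_nonneg _) (by nlinarith)).trans hΦ
  have h₂ : |Φ' * ((a' - a) * (2 - a - a'))| ≤ 1 / 25 * (d * 2) := by
    rw [abs_mul, abs_mul, abs_sub_comm a' a, abs_of_nonneg hΦ'₀,
      abs_of_nonneg (show 0 ≤ 2 - a - a' by linarith)]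
    exact mul_le_mul hΦ' (mul_le_mul had (by linarith) (by linarith) ((abs_nonneg _).trans had))
      (mul_nonneg (abs_nonneg _) (by linarith)) (by norm_num)
  calc |Φ * (1 - a) ^ 2 - Φ' * (1 - a') ^ 2|
      = |(Φ - Φ') * (1 - a) ^ 2 + Φ' * ((a' - a) * (2 - a - a'))| := by ring_nf
    _ ≤ d / 10 + 1 / 25 * (d * 2) := (abs_add_le _ _).trans (add_le_add h₁ h₂)
    _ ≤ d / 2 := by linarith [(abs_nonneg _).trans had]

end OneCoordinate

def fixedPointMap (F G : ℝ × ℝ → ℝ) (x : ℝ × ℝ) : ℝ × ℝ :=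
  (F x * (1 - x.1) ^ 2, G x * (1 - x.2) ^ 2)

theorem exists_stable_solution {F G : ℝ × ℝ → ℝ}
    (hF : ∀ x ∈ Ico (0 : ℝ) 1 ×ˢ Ico (0 : ℝ) 1, 0 ≤ F x ∧ F x * (1 - x.1) ^ 2 ≤ 1 / 100)
    (hG : ∀ x ∈ Ico (0 : ℝ) 1 ×ˢ Ico (0 : ℝ) 1, 0 ≤ G x ∧ G x * (1 - x.2) ^ 2 ≤ 1 / 100)
    (hF_lip : ∀ x ∈ Icc (0 : ℝ) (1 / 2) ×ˢ Icc (0 : ℝ) (1 / 2),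
      ∀ y ∈ Icc (0 : ℝ) (1 / 2) ×ˢ Icc (0 : ℝ) (1 / 2), |F x - F y| ≤ dist x y / 10)
    (hG_lip : ∀ x ∈ Icc (0 : ℝ) (1 / 2) ×ˢ Icc (0 : ℝ) (1 / 2),
      ∀ y ∈ Icc (0 : ℝ) (1 / 2) ×ˢ Icc (0 : ℝ) (1 / 2), |G x - G y| ≤ dist x y / 10) :
    ∃ x₀ ∈ Ico (0 : ℝ) 1 ×ˢ Ico (0 : ℝ) 1,
      F x₀ = x₀.1 / (1 - x₀.1) ^ 2 ∧ G x₀ = x₀.2 / (1 - x₀.2) ^ 2 ∧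
      ∀ x ∈ Ico (0 : ℝ) 1 ×ˢ Ico (0 : ℝ) 1, ∀ ε ≤ 1 / 100,
        |F x - x.1 / (1 - x.1) ^ 2| ≤ ε → |G x - x.2 / (1 - x.2) ^ 2| ≤ ε → dist x x₀ ≤ 2 * ε := by
  set S := Icc (0 : ℝ) (1 / 2) ×ˢ Icc (0 : ℝ) (1 / 2)
  set T := fixedPointMap F G
  have hS : S ⊆ Ico (0 : ℝ) 1 ×ˢ Ico (0 : ℝ) 1 :=
    prod_mono (Icc_subset_Ico_right (by norm_num)) (Icc_subset_Ico_right (by norm_num))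
  have hmaps : MapsTo T S S := fun x hx => by
    obtain ⟨hF₀, hF₁⟩ := hF x (hS hx)
    obtain ⟨hG₀, hG₁⟩ := hG x (hS hx)
    exact ⟨⟨mul_nonneg hF₀ (sq_nonneg _), hF₁.trans (by norm_num)⟩,
      ⟨mul_nonneg hG₀ (sq_nonneg _), hG₁.trans (by norm_num)⟩⟩
  have hcontr : ∀ x ∈ S, ∀ y ∈ S, dist (T x) (T y) ≤ (1 / 2 : NNReal) * dist x y := by
    intro x hx y hy
    have hdist₁ : |x.1 - y.1| ≤ dist x y := le_max_left _ _
    have hdist₂ : |x.2 - y.2| ≤ dist x y := le_max_right _ _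
    obtain ⟨hF₀, hF₁⟩ := hF y (hS hy)
    obtain ⟨hG₀, hG₁⟩ := hG y (hS hy)
    rw [Prod.dist_eq, Real.dist_eq, Real.dist_eq, NNReal.coe_div, NNReal.coe_one, NNReal.coe_two,
      one_div_mul_eq_div]
    exact max_le
      (abs_mul_one_sub_sq_sub_mul_one_sub_sq_le hx.1 hy.1 hF₀
        (le_of_mul_one_sub_sq_le hy.1.2 hF₁) (hF_lip x hx y hy) hdist₁)
      (abs_mul_one_sub_sq_sub_mul_one_sub_sq_le hx.2 hy.2 hG₀
        (le_of_mul_one_sub_sq_le hy.2.2 hG₁) (hG_lip x hx y hy) hdist₂)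
  obtain ⟨x₀, hx₀S, hfix, hstab⟩ := exists_isFixedPt_dist_le_of_mapsTo
    (by rw [← NNReal.coe_lt_coe]; norm_num) (isClosed_Icc.prod isClosed_Icc).isComplete
    ((nonempty_Icc.2 (by norm_num)).prod (nonempty_Icc.2 (by norm_num))) hmaps hcontr
  obtain ⟨⟨ha₀, ha₁⟩, ⟨hb₀, hb₁⟩⟩ := hS hx₀S
  refine ⟨x₀, hS hx₀S, ?_, ?_, fun x hx ε hε h₁ h₂ => ?_⟩
  · rw [eq_div_iff (by nlinarith)]; exact congrArg Prod.fst hfix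
  · rw [eq_div_iff (by nlinarith)]; exact congrArg Prod.snd hfix
  have hxS : x ∈ S :=
    ⟨⟨hx.1.1, le_half_of_abs_sub_div_one_sub_sq_le hx.1.1 hx.1.2 (hF x hx).2 hε h₁⟩,
      ⟨hx.2.1, le_half_of_abs_sub_div_one_sub_sq_le hx.2.1 hx.2.2 (hG x hx).2 hε h₂⟩⟩
  have hTx : dist x (T x) ≤ ε := by
    rw [Prod.dist_eq, dist_comm x.1, dist_comm x.2, Real.dist_eq, Real.dist_eq]
    exact max_le (abs_mul_one_sub_sq_sub_le hx.1.1 hx.1.2 h₁)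
      (abs_mul_one_sub_sq_sub_le hx.2.1 hx.2.2 h₂)
  calc dist x x₀ ≤ dist x (T x) / (1 - (1 / 2 : NNReal)) := hstab x hxS
    _ ≤ 2 * ε := by
        norm_num; linarith

lemma sq_add_div_mul_le {h D s κ : ℝ} (hκ : 0 < κ) (hκ₁ : κ ≤ 1) (hh : |h| ≤ κ / 200)
    (hs : s ≤ 1) (hD : D * s ≤ κ / 200) :
    (h ^ 2 + D / κ) * s ≤ 1 / 100 := by
  have hh₂ : h ^ 2 ≤ (1 / 200) ^ 2 := by
    rw [← sq_abs]; exact pow_le_pow_left₀ (abs_nonneg h) (hh.trans (by linarith)) 2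
  have hDκ : D * s / κ ≤ 1 / 200 := by
    rw [div_le_iff₀ hκ]; linarith
  calc (h ^ 2 + D / κ) * s = h ^ 2 * s + D * s / κ := by ring
    _ ≤ h ^ 2 * 1 + 1 / 200 := by gcongr
    _ ≤ 1 / 100 := by linarith

lemma abs_sq_add_div_sub_sq_add_div_le {h D D' κ ξ d : ℝ} (hκ : 0 < κ) (hξ : ξ ≤ κ / 200)
    (hd : 0 ≤ d) (hD : |D - D'| ≤ 5 * ξ * d) :
    |(h ^ 2 + D / κ) - (h ^ 2 + D' / κ)| ≤ d / 10 := by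
  rw [add_sub_add_left_eq_sub, ← sub_div, abs_div, abs_of_pos hκ, div_le_iff₀ hκ]
  nlinarith

section SmallCoefficients

variable {β : ℕ → ℕ → ℝ} {h κ : ℝ}

lemma sq_add_dxXi_div_bounds (hβ : Summable fun pq : ℕ × ℕ => β pq.1 pq.2 ^ 2) (hκ : 0 < κ)
    (hκ₁ : κ ≤ 1) (hξ : xiFn β 1 1 ≤ κ / 200) (hh : |h| ≤ κ / 200) :
    (∀ x ∈ Ico (0 : ℝ) 1 ×ˢ Ico (0 : ℝ) 1, 0 ≤ h ^ 2 + dxXi β x.1 x.2 / κ ∧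
      (h ^ 2 + dxXi β x.1 x.2 / κ) * (1 - x.1) ^ 2 ≤ 1 / 100) ∧
    ∀ x ∈ Icc (0 : ℝ) (1 / 2) ×ˢ Icc (0 : ℝ) (1 / 2),
      ∀ y ∈ Icc (0 : ℝ) (1 / 2) ×ˢ Icc (0 : ℝ) (1 / 2),
        |(h ^ 2 + dxXi β x.1 x.2 / κ) - (h ^ 2 + dxXi β y.1 y.2 / κ)| ≤ dist x y / 10 :=
  ⟨fun _ ⟨⟨ha₀, ha⟩, ⟨hb₀, hb⟩⟩ =>
    ⟨add_nonneg (sq_nonneg _) (div_nonneg (dxXi_nonneg ha₀ hb₀) hκ.le),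
      sq_add_div_mul_le hκ hκ₁ hh (by nlinarith)
        ((dxXi_mul_one_sub_sq_le hβ ha₀ ha.le hb₀ hb.le).trans hξ)⟩,
    fun _ hx _ hy => abs_sq_add_div_sub_sq_add_div_le hκ hξ dist_nonneg
      (abs_dxXi_sub_dxXi_le hβ hx hy)⟩

lemma sq_add_dyXi_div_bounds (hβ : Summable fun pq : ℕ × ℕ => β pq.1 pq.2 ^ 2) (hκ : 0 < κ)
    (hκ₁ : κ ≤ 1) (hξ : xiFn β 1 1 ≤ κ / 200) (hh : |h| ≤ κ / 200) :
    (∀ x ∈ Ico (0 : ℝ) 1 ×ˢ Ico (0 : ℝ) 1, 0 ≤ h ^ 2 + dyXi β x.1 x.2 / κ ∧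
      (h ^ 2 + dyXi β x.1 x.2 / κ) * (1 - x.2) ^ 2 ≤ 1 / 100) ∧
    ∀ x ∈ Icc (0 : ℝ) (1 / 2) ×ˢ Icc (0 : ℝ) (1 / 2),
      ∀ y ∈ Icc (0 : ℝ) (1 / 2) ×ˢ Icc (0 : ℝ) (1 / 2),
        |(h ^ 2 + dyXi β x.1 x.2 / κ) - (h ^ 2 + dyXi β y.1 y.2 / κ)| ≤ dist x y / 10 :=
  ⟨fun _ ⟨⟨ha₀, ha⟩, ⟨hb₀, hb⟩⟩ =>
    ⟨add_nonneg (sq_nonneg _) (div_nonneg (dyXi_nonneg ha₀ hb₀) hκ.le),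
      sq_add_div_mul_le hκ hκ₁ hh (by nlinarith)
        ((dyXi_mul_one_sub_sq_le hβ ha₀ ha.le hb₀ hb.le).trans hξ)⟩,
    fun _ hx _ hy => abs_sq_add_div_sub_sq_add_div_le hκ hξ dist_nonneg
      (abs_dyXi_sub_dyXi_le hβ hx hy)⟩

end SmallCoefficients

/-- stability of the fixed point equations: for `ξ(1,1), |h₁|, |h₂|` small,
if `(a,b) ∈ [0,1)²` solves the critical point system up to an error `ε ≤ ε₀`, then
`|a−a₀| ≤ Lε` and `|b−b₀| ≤ Lε`, where `(a₀,b₀)` is the unique solution in `[0,1)²` of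
`h₁² + ∂ₓξ(a₀,b₀)/γ = a₀/(1−a₀)²`, `h₂² + ∂_yξ(a₀,b₀)/(1−γ) = b₀/(1−b₀)²`. -/
theorem stmt4 (γ : ℝ) (hγ : γ ∈ Ioo (0:ℝ) 1) :
    ∃ M₀ ε₀ L : ℝ, 0 < M₀ ∧ 0 < ε₀ ∧ 0 < L ∧
      ∀ (h₁ h₂ : ℝ) (β : ℕ → ℕ → ℝ),
        (∀ p q, 0 ≤ β p q) → (∀ p q, p = 0 ∨ q = 0 → β p q = 0) →
        (∃ p q, β p q ≠ 0) →
        Summable (fun pq : ℕ × ℕ => (2 : ℝ) ^ (pq.1 + pq.2) * (β pq.1 pq.2) ^ 2) →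
        xiFn β 1 1 < M₀ → |h₁| < M₀ → |h₂| < M₀ →
          ∃ a₀ b₀ : ℝ, (a₀, b₀) ∈ Ico (0:ℝ) 1 ×ˢ Ico (0:ℝ) 1
            ∧ h₁ ^ 2 + dxXi β a₀ b₀ / γ = a₀ / (1 - a₀) ^ 2
            ∧ h₂ ^ 2 + dyXi β a₀ b₀ / (1 - γ) = b₀ / (1 - b₀) ^ 2
            ∧ (∀ a b : ℝ, (a, b) ∈ Ico (0:ℝ) 1 ×ˢ Ico (0:ℝ) 1 →
                h₁ ^ 2 + dxXi β a b / γ = a / (1 - a) ^ 2 →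
                h₂ ^ 2 + dyXi β a b / (1 - γ) = b / (1 - b) ^ 2 → a = a₀ ∧ b = b₀)
            ∧ ∀ a b ε : ℝ, (a, b) ∈ Ico (0:ℝ) 1 ×ˢ Ico (0:ℝ) 1 → 0 ≤ ε → ε ≤ ε₀ →
                |h₁ ^ 2 + dxXi β a b / γ - a / (1 - a) ^ 2| ≤ ε →
                |h₂ ^ 2 + dyXi β a b / (1 - γ) - b / (1 - b) ^ 2| ≤ ε →
                |a - a₀| ≤ L * ε ∧ |b - b₀| ≤ L * ε := by
  obtain ⟨hγ₀, hγ₁⟩ := hγ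
  set M := min γ (1 - γ) / 200
  have hMγ : M ≤ γ / 200 := div_le_div_of_nonneg_right (min_le_left _ _) (by norm_num)
  have hMγ' : M ≤ (1 - γ) / 200 := div_le_div_of_nonneg_right (min_le_right _ _) (by norm_num)
  refine ⟨M, 1 / 100, 2, div_pos (lt_min hγ₀ (by linarith)) (by norm_num), by norm_num,
    by norm_num, fun h₁ h₂ β _ _ _ hβ hξ hh₁ hh₂ => ?_⟩
  have hβ₂ := summable_sq_of_summable_two_pow_mul_sq hβ
  obtain ⟨hF, hF_lip⟩ := sq_add_dxXi_div_bounds hβ₂ hγ₀ hγ₁.le (hξ.le.trans hMγ)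
    (hh₁.le.trans hMγ)
  obtain ⟨hG, hG_lip⟩ := sq_add_dyXi_div_bounds hβ₂ (sub_pos.2 hγ₁) (by linarith)
    (hξ.le.trans hMγ') (hh₂.le.trans hMγ')
  obtain ⟨⟨a₀, b₀⟩, hx₀, heq₁, heq₂, hstab⟩ := exists_stable_solution hF hG hF_lip hG_lip
  refine ⟨a₀, b₀, hx₀, heq₁, heq₂, fun a b hab e₁ e₂ => ?_, fun a b ε hab _ hε e₁ e₂ => ?_⟩
  · have h := hstab (a, b) hab 0 (by norm_num) (by simp [e₁]) (by simp [e₂])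
    exact Prod.mk.inj (dist_le_zero.1 (by linarith))
  · have h := hstab (a, b) hab ε hε e₁ e₂
    exact ⟨(le_max_left _ _).trans h, (le_max_right _ _).trans h⟩
end

section
/- Let (Ω,μ) be a probability space and X, Y : Ω → [0,∞) be bounded measurable functions such that E[X^{2k+2}] ≤ E[Y^{2k+2}] for every integer k ≥ 0. Then for every λ ≥ 0 one has E[X² exp(λY²)] ≤ E[Y² exp(λY²)]. -/
/-!
Writing `U = X²`, `V = Y²`, both sides expand as `∑ λⁿ/n! · E[U Vⁿ]` and `∑ λⁿ/n! · E[V Vⁿ]`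
(the series may be integrated termwise since everything is bounded). Termwise comparison follows
from the pointwise Young inequality `(k+1) u vᵏ ≤ uᵏ⁺¹ + k vᵏ⁺¹`: integrating it and using
`E[Uᵏ⁺¹] ≤ E[Vᵏ⁺¹]` gives `E[U Vᵏ] ≤ E[Vᵏ⁺¹]`.
-/

open MeasureTheory Real

/-- Weighted AM–GM for the weights `1/(k+1)` and `k/(k+1)`, with denominators cleared. -/
theorem mul_mul_pow_le_pow_add_mul_pow {R : Type*} [CommRing R] [LinearOrder R]
    [IsStrictOrderedRing R] {u v : R} (hu : 0 ≤ u) (hv : 0 ≤ v) (k : ℕ) :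
    (k + 1) * (u * v ^ k) ≤ u ^ (k + 1) + k * v ^ (k + 1) := by
  induction k with
  | zero => simp
  | succ k ih =>
    have hmono : 0 ≤ (u ^ (k + 1) - v ^ (k + 1)) * (u - v) := by
      rcases le_total u v with h | h
      · exact mul_nonneg_of_nonpos_of_nonpos
          (sub_nonpos.2 (pow_le_pow_left₀ hu h _)) (sub_nonpos.2 h)
      · exact mul_nonneg (sub_nonneg.2 (pow_le_pow_left₀ hv h _)) (sub_nonneg.2 h)
    push_cast
    linear_combination mul_le_mul_of_nonneg_right ih hv + hmono

section
variable {Ω : Type*} [MeasurableSpace Ω] {μ : Measure Ω}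

theorem integral_mul_pow_le_integral_pow_succ {U V : Ω → ℝ} {k : ℕ}
    (hU : ∀ ω, 0 ≤ U ω) (hV : ∀ ω, 0 ≤ V ω)
    (hUV : AEStronglyMeasurable (fun ω => U ω * V ω ^ k) μ)
    (hUi : Integrable (fun ω => U ω ^ (k + 1)) μ) (hVi : Integrable (fun ω => V ω ^ (k + 1)) μ)
    (hmom : ∫ ω, U ω ^ (k + 1) ∂μ ≤ ∫ ω, V ω ^ (k + 1) ∂μ) :
    ∫ ω, U ω * V ω ^ k ∂μ ≤ ∫ ω, V ω ^ (k + 1) ∂μ := by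
  have hk : (0 : ℝ) < k + 1 := by positivity
  have hyoung : ∀ ω, (k + 1) * (U ω * V ω ^ k) ≤ U ω ^ (k + 1) + k * V ω ^ (k + 1) :=
    fun ω => mul_mul_pow_le_pow_add_mul_pow (hU ω) (hV ω) k
  have hsum : Integrable (fun ω => U ω ^ (k + 1) + k * V ω ^ (k + 1)) μ :=
    hUi.add (hVi.const_mul _)
  have hUVi : Integrable (fun ω => (k + 1) * (U ω * V ω ^ k)) μ :=
    hsum.mono' (hUV.const_mul _) (ae_of_all _ fun ω => by
      rw [Real.norm_of_nonneg (by have := hU ω; have := hV ω; positivity)]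
      exact hyoung ω)
  have := integral_mono hUVi hsum hyoung
  rw [integral_const_mul, integral_add hUi (hVi.const_mul _), integral_const_mul] at this
  nlinarith

theorem integrable_pow_of_abs_le [IsFiniteMeasure μ] {f : Ω → ℝ} {C : ℝ}
    (hf : AEStronglyMeasurable f μ) (hC : ∀ ω, |f ω| ≤ C) (m : ℕ) :
    Integrable (fun ω => f ω ^ m) μ :=
  .of_bound (hf.pow m) (C ^ m) (ae_of_all _ fun ω => by
    rw [norm_pow, Real.norm_eq_abs]
    exact pow_le_pow_left₀ (abs_nonneg _) (hC ω) m)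

theorem hasSum_integral_mul_exp [IsFiniteMeasure μ] {F G : Ω → ℝ} {a b : ℝ}
    (hF : AEStronglyMeasurable F μ) (hG : AEStronglyMeasurable G μ)
    (hFa : ∀ ω, |F ω| ≤ a) (hGb : ∀ ω, |G ω| ≤ b) (c : ℝ) :
    HasSum (fun n : ℕ => c ^ n / n.factorial * ∫ ω, F ω * G ω ^ n ∂μ)
      (∫ ω, F ω * exp (c * G ω) ∂μ) := by
  simp_rw [← integral_const_mul]
  refine hasSum_integral_of_dominated_convergence
    (fun n _ => a * ((|c| * b) ^ n / n.factorial))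
    (fun n => ((hF.mul (hG.pow n)).const_mul _)) (fun n => ae_of_all _ fun ω => ?_)
    (ae_of_all _ fun _ => (summable_pow_div_factorial _).mul_left a)
    (integrable_const _) (ae_of_all _ fun ω => ?_)
  · rw [Real.norm_eq_abs, abs_mul, abs_mul, abs_div, abs_pow, abs_pow, Nat.abs_cast,
      show |c| ^ n / n.factorial * (|F ω| * |G ω| ^ n) = |F ω| * (|c| ^ n * |G ω| ^ n / n.factorial)
        by ring, mul_pow]
    gcongr
    exacts [(abs_nonneg _).trans (hFa ω), hFa ω, hGb ω]
  · rw [Real.exp_eq_exp_ℝ]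
    refine ((NormedSpace.expSeries_div_hasSum_exp (c * G ω)).mul_left (F ω)).congr_fun ?_
    intro n
    ring
end

/-- If `X, Y : Ω → [0,∞)` are bounded measurable functions on a probability
space with `E[X^(2k+2)] ≤ E[Y^(2k+2)]` for every `k ≥ 0`, then for every `λ ≥ 0`,
`E[X² exp(λ Y²)] ≤ E[Y² exp(λ Y²)]`. -/
theorem stmt7 {Ω : Type*} [MeasurableSpace Ω] (μ : Measure Ω) [IsProbabilityMeasure μ]
    (X Y : Ω → ℝ) (hXm : Measurable X) (hYm : Measurable Y)
    (hX0 : ∀ ω, 0 ≤ X ω) (hY0 : ∀ ω, 0 ≤ Y ω)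
    (CX CY : ℝ) (hXb : ∀ ω, X ω ≤ CX) (hYb : ∀ ω, Y ω ≤ CY)
    (hmom : ∀ k : ℕ, ∫ ω, X ω ^ (2 * k + 2) ∂μ ≤ ∫ ω, Y ω ^ (2 * k + 2) ∂μ) :
    ∀ lam : ℝ, 0 ≤ lam →
      ∫ ω, X ω ^ 2 * Real.exp (lam * Y ω ^ 2) ∂μ
        ≤ ∫ ω, Y ω ^ 2 * Real.exp (lam * Y ω ^ 2) ∂μ := by
  intro lam hlam
  have hU : AEStronglyMeasurable (fun ω => X ω ^ 2) μ := (hXm.pow_const 2).aestronglyMeasurable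
  have hV : AEStronglyMeasurable (fun ω => Y ω ^ 2) μ := (hYm.pow_const 2).aestronglyMeasurable
  have hUb : ∀ ω, |X ω ^ 2| ≤ CX ^ 2 := fun ω => by
    rw [abs_of_nonneg (sq_nonneg _)]; exact pow_le_pow_left₀ (hX0 ω) (hXb ω) 2
  have hVb : ∀ ω, |Y ω ^ 2| ≤ CY ^ 2 := fun ω => by
    rw [abs_of_nonneg (sq_nonneg _)]; exact pow_le_pow_left₀ (hY0 ω) (hYb ω) 2
  have hmixed : ∀ k : ℕ, ∫ ω, X ω ^ 2 * (Y ω ^ 2) ^ k ∂μ ≤ ∫ ω, Y ω ^ 2 * (Y ω ^ 2) ^ k ∂μ := by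
    intro k
    simp_rw [← pow_succ']
    refine integral_mul_pow_le_integral_pow_succ (fun _ => sq_nonneg _) (fun _ => sq_nonneg _)
      (hU.mul (hV.pow k)) (integrable_pow_of_abs_le hU hUb _)
      (integrable_pow_of_abs_le hV hVb _) ?_
    simpa only [← pow_mul, mul_add, mul_one] using hmom k
  exact hasSum_le (fun n => mul_le_mul_of_nonneg_left (hmixed n) (by positivity))
    (hasSum_integral_mul_exp hU hV hUb hVb lam) (hasSum_integral_mul_exp hV hV hVb hVb lam)
end
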